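/- Let G be a graph whose complementary graph G^c is chordal with exactly three facets F, F', F'' in its clique complex, forming a leaf order in that order. Then this leaf order is sensitive if and only if F ∩ F' ≠ ∅ and (F ∪ F') ∩ F'' ≠ ∅. -/

import Mathlib

open Finset

attribute [local instance] Classical.propDecidable

variable {n : ℕ}

/-- A graph is chordal if every cycle of length greater than 3 has a chord. -/
def IsChordal {α : Type} (G : SimpleGraph α) : Prop :=
  ∀ (v : α) (w : G.Walk v v), w.IsCycle → 3 < w.length →
    ∃ a ∈ w.support, ∃ b ∈ w.support, G.Adj a b ∧ s(a, b) ∉ w.edges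

/-- The clique complex of a graph. -/
def cliqueCx (G : SimpleGraph (Fin n)) : Set (Finset (Fin n)) :=
  {s | G.IsClique (↑s : Set (Fin n))}

/-- `F` is a facet (maximal face) of the simplicial complex `Δ`. -/
def IsFacet (Δ : Set (Finset (Fin n))) (F : Finset (Fin n)) : Prop :=
  F ∈ Δ ∧ ∀ s ∈ Δ, F ⊆ s → s = F

/-- The subcomplex `⟨F_1, …, F_i⟩` generated by the facets `F j` for `j ≤ i`. -/
def gen (q : ℕ) (F : Fin q → Finset (Fin n)) (i : Fin q) : Set (Finset (Fin n)) :=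
  {s | ∃ j ≤ i, s ⊆ F j}

/-- `B` is a branch of the facet `Fc` in `Δ`. -/
def IsBranch (Δ : Set (Finset (Fin n))) (Fc B : Finset (Fin n)) : Prop :=
  IsFacet Δ B ∧ B ≠ Fc ∧ ∀ H, IsFacet Δ H → H ≠ Fc → H ∩ Fc ⊆ B ∩ Fc

/-- `Fc` is a leaf of `Δ`: a facet admitting a branch. -/
def IsLeaf (Δ : Set (Finset (Fin n))) (Fc : Finset (Fin n)) : Prop :=
  IsFacet Δ Fc ∧ ∃ B, IsBranch Δ Fc B

/-- `F : Fin q → Finset (Fin n)` is a leaf order of `Δ`. -/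
def IsLeafOrder (Δ : Set (Finset (Fin n))) (q : ℕ) (F : Fin q → Finset (Fin n)) : Prop :=
  Function.Injective F ∧ (∀ i, IsFacet Δ (F i)) ∧ (∀ s, IsFacet Δ s → ∃ i, F i = s) ∧
    ∀ i : Fin q, 0 < (i : ℕ) → IsLeaf (gen q F i) (F i)

/-- A leaf order is sensitive if each `F_i` (`i > 1`) has a unique branch `G_i` in
`⟨F_1, …, F_i⟩` and the intersections `G_i ∩ F_i` are pairwise incomparable. -/
def IsSensitive (q : ℕ) (F : Fin q → Finset (Fin n)) : Prop :=
  (∀ i : Fin q, 0 < (i : ℕ) → ∃! B, IsBranch (gen q F i) (F i) B) ∧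
    ∀ i j : Fin q, ∀ Bi Bj, 0 < (i : ℕ) → 0 < (j : ℕ) → i ≠ j →
      IsBranch (gen q F i) (F i) Bi → IsBranch (gen q F j) (F j) Bj →
        ¬ (Bi ∩ F i ⊆ Bj ∩ F j)

/-!
Since `G` has no isolated vertex, every vertex `v` misses some facet of `Δ(Gᶜ)` (extend `{w}` to a
facet, for a neighbour `w` of `v` in `G`), so `F ∩ F' ∩ F'' = ∅`. The only branch of `F'` in
`⟨F, F'⟩` is `F`, with `F ∩ F'` as intersection. A branch `B` of `F''` is `F` or `F'` and contains
both `F ∩ F''` and `F' ∩ F''`, so `B ∩ F'' = (F ∪ F') ∩ F''`; if both `F` and `F'` were branches,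
then `(F ∪ F') ∩ F'' = F ∩ F'' = F' ∩ F''` would lie in `F ∩ F' ∩ F'' = ∅`. Finally `F ∩ F'` and
`(F ∪ F') ∩ F''` are disjoint, hence incomparable exactly when both are nonempty.
-/

theorem exists_isFacet_superset (Δ : Set (Finset (Fin n))) {s : Finset (Fin n)} (hs : s ∈ Δ) :
    ∃ t, IsFacet Δ t ∧ s ⊆ t := by
  obtain ⟨t, ⟨htΔ, hst⟩, hmax⟩ :=
    (Set.toFinite {t | t ∈ Δ ∧ s ⊆ t}).exists_maximal ⟨s, hs, subset_rfl⟩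
  exact ⟨t, ⟨htΔ, fun u hu htu => (htu.antisymm (hmax ⟨hu, hst.trans htu⟩ htu)).symm⟩, hst⟩

theorem exists_isFacet_notMem {H : SimpleGraph (Fin n)} {v w : Fin n} (hvw : ¬ H.Adj v w)
    (hne : v ≠ w) : ∃ s, IsFacet (cliqueCx H) s ∧ v ∉ s := by
  have hw : ({w} : Finset (Fin n)) ∈ cliqueCx H := by simp [cliqueCx]
  obtain ⟨s, hs, hws⟩ := exists_isFacet_superset _ hw
  exact ⟨s, hs, fun hv => hvw (hs.1 hv (hws (mem_singleton_self w)) hne)⟩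

theorem exists_notMem_of_facets_subset_range {G : SimpleGraph (Fin n)} {v w : Fin n}
    (hvw : G.Adj v w) {q : ℕ} {F : Fin q → Finset (Fin n)}
    (hF : {s | IsFacet (cliqueCx Gᶜ) s} ⊆ Set.range F) : ∃ i, v ∉ F i := by
  obtain ⟨s, hs, hvs⟩ :=
    exists_isFacet_notMem (H := Gᶜ) (by simp [SimpleGraph.compl_adj, hvw]) hvw.ne
  obtain ⟨i, rfl⟩ := hF hs
  exact ⟨i, hvs⟩

section Branches

variable {Δ : Set (Finset (Fin n))} {q : ℕ} {F : Fin q → Finset (Fin n)}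

theorem isFacet_gen_iff (hF : ∀ j, IsFacet Δ (F j)) {i : Fin q} {B : Finset (Fin n)} :
    IsFacet (gen q F i) B ↔ ∃ j ≤ i, F j = B := by
  constructor
  · rintro ⟨⟨j, hj, hBj⟩, hmax⟩
    exact ⟨j, hj, hmax _ ⟨j, hj, subset_rfl⟩ hBj⟩
  · rintro ⟨j, hj, rfl⟩
    refine ⟨⟨j, hj, subset_rfl⟩, fun s ⟨k, hk, hsk⟩ hjs => ?_⟩
    have hkj : F k = F j := (hF j).2 _ (hF k).1 (hjs.trans hsk)
    exact hsk.trans hkj.le |>.antisymm hjs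

theorem isBranch_gen_iff (hinj : Function.Injective F) (hF : ∀ j, IsFacet Δ (F j))
    {i : Fin q} {B : Finset (Fin n)} :
    IsBranch (gen q F i) (F i) B ↔ (∃ j < i, F j = B) ∧ ∀ k < i, F k ∩ F i ⊆ B ∩ F i := by
  simp only [IsBranch, isFacet_gen_iff hF]
  constructor
  · rintro ⟨⟨j, hj, rfl⟩, hji, hmax⟩
    exact ⟨⟨j, lt_of_le_of_ne hj (mt (congrArg F) hji), rfl⟩,
      fun k hk => hmax _ ⟨k, hk.le, rfl⟩ (hinj.ne hk.ne)⟩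
  · rintro ⟨⟨j, hj, rfl⟩, hmax⟩
    refine ⟨⟨j, hj.le, rfl⟩, hinj.ne hj.ne, ?_⟩
    rintro _ ⟨k, hk, rfl⟩ hki
    exact hmax k (lt_of_le_of_ne hk (mt (congrArg F) hki))

end Branches

theorem isSensitive_three_iff (F : Fin 3 → Finset (Fin n)) :
    IsSensitive 3 F ↔ (∃! B, IsBranch (gen 3 F 1) (F 1) B) ∧
      (∃! B, IsBranch (gen 3 F 2) (F 2) B) ∧
      ∀ B₁ B₂, IsBranch (gen 3 F 1) (F 1) B₁ → IsBranch (gen 3 F 2) (F 2) B₂ →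
        ¬ B₁ ∩ F 1 ⊆ B₂ ∩ F 2 ∧ ¬ B₂ ∩ F 2 ⊆ B₁ ∩ F 1 := by
  simp only [IsSensitive, Fin.val_pos_iff, Fin.isValue, Fin.forall_fin_succ, lt_self_iff_false,
    IsEmpty.forall_iff, Fin.succ_pos, forall_const, Fin.succ_zero_eq_one, Fin.succ_one_eq_two,
    and_true, true_and, ne_eq, implies_true, zero_ne_one, not_false_eq_true, Fin.reduceEq, and_self,
    not_true_eq_false]
  constructor
  · rintro ⟨⟨h₁, h₂⟩, h₁₂, h₂₁⟩
    exact ⟨h₁, h₂, fun B₁ B₂ hB₁ hB₂ => ⟨h₁₂ B₁ B₂ hB₁ hB₂, h₂₁ B₂ B₁ hB₂ hB₁⟩⟩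
  · rintro ⟨h₁, h₂, h⟩
    exact ⟨⟨h₁, h₂⟩, fun B₁ B₂ hB₁ hB₂ => (h B₁ B₂ hB₁ hB₂).1,
      fun B₂ B₁ hB₂ hB₁ => (h B₁ B₂ hB₁ hB₂).2⟩

section ThreeFacets

variable {Δ : Set (Finset (Fin n))} {A B C D : Finset (Fin n)}

theorem isBranch_gen_one_iff (hinj : Function.Injective ![A, B, C])
    (hF : ∀ j, IsFacet Δ (![A, B, C] j)) :
    IsBranch (gen 3 ![A, B, C] 1) B D ↔ D = A := by
  refine (isBranch_gen_iff (i := 1) hinj hF).trans ?_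
  simp only [Fin.lt_one_iff, exists_eq_left, forall_eq, Matrix.cons_val_zero, Matrix.cons_val_one]
  exact ⟨fun h => h.1.symm, by rintro rfl; exact ⟨rfl, subset_rfl⟩⟩

theorem isBranch_gen_two_iff (hinj : Function.Injective ![A, B, C])
    (hF : ∀ j, IsFacet Δ (![A, B, C] j)) :
    IsBranch (gen 3 ![A, B, C] 2) C D ↔
      (A = D ∨ B = D) ∧ A ∩ C ⊆ D ∩ C ∧ B ∩ C ⊆ D ∩ C := by
  refine (isBranch_gen_iff (i := 2) hinj hF).trans ?_
  simp [Fin.exists_fin_succ, Fin.forall_fin_succ]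

theorem inter_eq_of_isBranch_gen_two (hinj : Function.Injective ![A, B, C])
    (hF : ∀ j, IsFacet Δ (![A, B, C] j))
    (hD : IsBranch (gen 3 ![A, B, C] 2) C D) : D ∩ C = (A ∪ B) ∩ C := by
  obtain ⟨hD, hAC, hBC⟩ := (isBranch_gen_two_iff hinj hF).1 hD
  rw [union_inter_distrib_right]
  refine (union_subset hAC hBC).antisymm' ?_
  rcases hD with rfl | rfl
  exacts [subset_union_left, subset_union_right]

theorem eq_of_isBranch_gen_two (hinj : Function.Injective ![A, B, C])
    (hF : ∀ j, IsFacet Δ (![A, B, C] j))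
    (hABC : A ∩ B ∩ C = ∅) (hne : (A ∪ B) ∩ C ≠ ∅) {D₁ D₂ : Finset (Fin n)}
    (hD₁ : IsBranch (gen 3 ![A, B, C] 2) C D₁) (hD₂ : IsBranch (gen 3 ![A, B, C] 2) C D₂) :
    D₁ = D₂ := by
  by_contra hD
  have hAC_BC : A ∩ C = (A ∪ B) ∩ C ∧ B ∩ C = (A ∪ B) ∩ C := by
    have h₁ := inter_eq_of_isBranch_gen_two hinj hF hD₁
    have h₂ := inter_eq_of_isBranch_gen_two hinj hF hD₂
    obtain ⟨rfl | rfl, -⟩ := (isBranch_gen_two_iff hinj hF).1 hD₁ <;>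
      obtain ⟨rfl | rfl, -⟩ := (isBranch_gen_two_iff hinj hF).1 hD₂
    exacts [absurd rfl hD, ⟨h₁, h₂⟩, ⟨h₂, h₁⟩, absurd rfl hD]
  apply hne
  rw [← hABC, inter_inter_distrib_right, hAC_BC.1, hAC_BC.2, inter_self]

end ThreeFacets

theorem sensitive_iff_of_three_facets_general (G : SimpleGraph (Fin n))
    (hG : ∀ v, ∃ w, G.Adj v w)
    (F F' F'' : Finset (Fin n))
    (hord : IsLeafOrder (cliqueCx Gᶜ) 3 ![F, F', F'']) :
    IsSensitive 3 ![F, F', F''] ↔ F ∩ F' ≠ ∅ ∧ (F ∪ F') ∩ F'' ≠ ∅ := by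
  have hFFF : F ∩ F' ∩ F'' = ∅ := by
    ext v
    obtain ⟨w, hvw⟩ := hG v
    obtain ⟨i, hi⟩ := exists_notMem_of_facets_subset_range hvw hord.2.2.1
    fin_cases i <;> simp_all
  have hdisj : Disjoint (F ∩ F') ((F ∪ F') ∩ F'') := by
    rw [disjoint_left]
    intro v hv hv'
    exact notMem_empty v (hFFF ▸ mem_inter.2 ⟨hv, (mem_inter.1 hv').2⟩)
  obtain ⟨hinj, hfacet, -, hleaf⟩ := hord
  obtain ⟨-, D, hD⟩ := hleaf 2 (by decide)
  have hY := fun D' => inter_eq_of_isBranch_gen_two (D := D') hinj hfacet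
  rw [isSensitive_three_iff]
  simp only [Fin.isValue, Matrix.cons_val_one, Matrix.cons_val_zero,
    isBranch_gen_one_iff hinj hfacet, existsUnique_eq, Matrix.cons_val, true_and, ne_eq]
  constructor
  · rintro ⟨-, hinc⟩
    obtain ⟨h₁, h₂⟩ := hinc F D rfl hD
    rw [hY D hD] at h₁ h₂
    exact ⟨fun h => h₁ (h ▸ empty_subset _), fun h => h₂ (h ▸ empty_subset _)⟩
  · rintro ⟨hX, hYne⟩
    refine ⟨⟨D, hD, fun D' hD' => eq_of_isBranch_gen_two hinj hfacet hFFF hYne hD' hD⟩, ?_⟩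
    rintro _ D' rfl hD'
    rw [hY D' hD']
    exact ⟨fun h => hX (hdisj.eq_bot_of_le h), fun h => hYne (hdisj.symm.eq_bot_of_le h)⟩

/-- Let `G` be a graph whose complementary graph `Gᶜ` is chordal and whose clique complex
`Δ(Gᶜ)` has exactly the three facets `F, F', F''`, forming a leaf order in that order.
Then this leaf order is sensitive if and only if `F ∩ F' ≠ ∅` and `(F ∪ F') ∩ F'' ≠ ∅`. -/
theorem sensitive_iff_of_three_facets (G : SimpleGraph (Fin n))
    (hG : ∀ v, ∃ w, G.Adj v w) (hchordal : IsChordal Gᶜ)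
    (F F' F'' : Finset (Fin n)) (hne : F ≠ F' ∧ F ≠ F'' ∧ F' ≠ F'')
    (hfacets : ∀ s, IsFacet (cliqueCx Gᶜ) s ↔ s = F ∨ s = F' ∨ s = F'')
    (hord : IsLeafOrder (cliqueCx Gᶜ) 3 ![F, F', F'']) :
    IsSensitive 3 ![F, F', F''] ↔ F ∩ F' ≠ ∅ ∧ (F ∪ F') ∩ F'' ≠ ∅ :=
  sensitive_iff_of_three_facets_general G hG F F' F'' hord
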